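/- The programs P3 ∪ { ¬p } and P3 ∪ { ¬q }, where P3 = { p ← q , q ← p }, are not strongly equivalent, even though the formulas p and q are equivalent relative to P3. -/

import Mathlib

open scoped Classical

inductive Lit where
  | pos : ℕ → Lit
  | neg : ℕ → Lit
deriving DecidableEq

inductive Fml where
  | bot : Fml
  | top : Fml
  | lit : Lit → Fml
  | not : Fml → Fml
  | conj : Fml → Fml → Fml
  | disj : Fml → Fml → Fml
deriving DecidableEq

structure Rule where
  head : Fml
  body : Fml
deriving DecidableEq

abbrev Prog := Set Rule

/-- A set of literals is consistent if it contains no complementary pair. -/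
def Consistent (X : Set Lit) : Prop :=
  ∀ a : ℕ, ¬ (Lit.pos a ∈ X ∧ Lit.neg a ∈ X)

def Sat (X : Set Lit) : Fml → Prop
  | Fml.bot => False
  | Fml.top => True
  | Fml.lit l => l ∈ X
  | Fml.not F => ¬ Sat X F
  | Fml.conj F G => Sat X F ∧ Sat X G
  | Fml.disj F G => Sat X F ∨ Sat X G

def SatRule (X : Set Lit) (r : Rule) : Prop := Sat X r.body → Sat X r.head

def SatProg (X : Set Lit) (P : Prog) : Prop := ∀ r ∈ P, SatRule X r

/-- The reduct of a formula relative to X. -/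
noncomputable def Reduct (X : Set Lit) : Fml → Fml
  | Fml.bot => Fml.bot
  | Fml.top => Fml.top
  | Fml.lit l => Fml.lit l
  | Fml.not F => if Sat X F then Fml.bot else Fml.top
  | Fml.conj F G => Fml.conj (Reduct X F) (Reduct X G)
  | Fml.disj F G => Fml.disj (Reduct X F) (Reduct X G)

noncomputable def ReductRule (X : Set Lit) (r : Rule) : Rule :=
  ⟨Reduct X r.head, Reduct X r.body⟩

noncomputable def ReductProg (X : Set Lit) (P : Prog) : Prog :=
  ReductRule X '' P

/-- Y is an answer set for P: Y is minimal among consistent sets satisfying the reduct of P w.r.t. Y. -/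
def AnswerSet (Y : Set Lit) (P : Prog) : Prop :=
  Consistent Y ∧ SatProg Y (ReductProg Y P) ∧
    ∀ Z : Set Lit, Consistent Z → SatProg Z (ReductProg Y P) → Z ⊆ Y → Z = Y

def SEModel (P : Prog) (X Y : Set Lit) : Prop :=
  Consistent X ∧ Consistent Y ∧ X ⊆ Y ∧ SatProg Y P ∧ SatProg X (ReductProg Y P)

def StrongEq (P Q : Prog) : Prop :=
  ∀ R : Prog, ∀ Y : Set Lit, AnswerSet Y (P ∪ R) ↔ AnswerSet Y (Q ∪ R)

def Fml.negFree : Fml → Prop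
  | Fml.bot => True
  | Fml.top => True
  | Fml.lit l => ∃ a, l = Lit.pos a
  | Fml.not F => F.negFree
  | Fml.conj F G => F.negFree ∧ G.negFree
  | Fml.disj F G => F.negFree ∧ G.negFree

def ProgNegFree (P : Prog) : Prop := ∀ r ∈ P, r.head.negFree ∧ r.body.negFree

/-- The set of atoms (positive literals) in a set of literals. -/
def PosLits (Z : Set Lit) : Set Lit := {l ∈ Z | ∃ a, l = Lit.pos a}

def AtomsOnly (Z : Set Lit) : Prop := ∀ l ∈ Z, ∃ a, l = Lit.pos a

/-! On every SE-model `(X, Y)` of `P3` the reduct leaves the atoms `p`, `q` untouched and the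
reduct of `P3` is `P3` itself, so `X ⊨ p ↔ X ⊨ q`. Adding the fact `¬p`, on the other hand, makes
`{¬p}` an answer set (it falsifies both bodies of `P3`), and `{¬p}` violates the fact `¬q`. -/

def loop (p q : ℕ) : Prog :=
  {⟨Fml.lit (Lit.pos p), Fml.lit (Lit.pos q)⟩, ⟨Fml.lit (Lit.pos q), Fml.lit (Lit.pos p)⟩}

theorem satProg_loop_iff (X : Set Lit) (p q : ℕ) :
    SatProg X (loop p q) ↔ (Lit.pos p ∈ X ↔ Lit.pos q ∈ X) := by
  simp only [SatProg, loop, Set.forall_mem_insert, Set.mem_singleton_iff, forall_eq, SatRule, Sat]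
  exact and_comm.trans iff_iff_implies_and_implies.symm

theorem reductProg_loop (Y : Set Lit) (p q : ℕ) : ReductProg Y (loop p q) = loop p q :=
  Set.image_pair _ _ _

theorem sat_reduct_self (Y : Set Lit) : ∀ F : Fml, Sat Y (Reduct Y F) ↔ Sat Y F
  | .bot | .top | .lit _ => Iff.rfl
  | .not F => by by_cases h : Sat Y F <;> simp [Reduct, Sat, h]
  | .conj F G => and_congr (sat_reduct_self Y F) (sat_reduct_self Y G)
  | .disj F G => or_congr (sat_reduct_self Y F) (sat_reduct_self Y G)

theorem satProg_reductProg_self_iff (Y : Set Lit) (P : Prog) :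
    SatProg Y (ReductProg Y P) ↔ SatProg Y P := by
  simp only [SatProg, ReductProg, Set.forall_mem_image, SatRule, ReductRule, sat_reduct_self]

theorem consistent_singleton (l : Lit) : Consistent {l} :=
  fun _ ⟨hpos, hneg⟩ => Lit.noConfusion (hpos.trans hneg.symm)

theorem mem_of_satProg_reductProg_of_fact {X Y : Set Lit} {P : Prog} {l : Lit}
    (hX : SatProg X (ReductProg Y P)) (hl : ⟨Fml.lit l, Fml.top⟩ ∈ P) : l ∈ X :=
  hX _ (Set.mem_image_of_mem _ hl) trivial

theorem answerSet_singleton_of_fact {P : Prog} {l : Lit} (hP : SatProg {l} P)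
    (hl : ⟨Fml.lit l, Fml.top⟩ ∈ P) : AnswerSet {l} P :=
  ⟨consistent_singleton l, (satProg_reductProg_self_iff _ _).2 hP,
    fun _ _ hZ hZl => Set.Subset.antisymm hZl
      (Set.singleton_subset_iff.2 (mem_of_satProg_reductProg_of_fact hZ hl))⟩

theorem answerSet_loop_union_neg_fact (p q : ℕ) :
    AnswerSet {Lit.neg p} (loop p q ∪ {⟨Fml.lit (Lit.neg p), Fml.top⟩}) := by
  refine answerSet_singleton_of_fact ?_ (Or.inr rfl)
  rintro r (hr | rfl)
  · refine (satProg_loop_iff _ p q).2 ?_ r hr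
    simp
  · exact fun _ => rfl

/-- with P3 = { p ← q , q ← p }, the formulas p and q are equivalent
relative to P3, yet P3 ∪ {¬p} and P3 ∪ {¬q} are not strongly equivalent. -/
theorem stmt12 (p q : ℕ) (hpq : p ≠ q) :
    (∀ X Y : Set Lit,
        SEModel ({⟨Fml.lit (Lit.pos p), Fml.lit (Lit.pos q)⟩,
                  ⟨Fml.lit (Lit.pos q), Fml.lit (Lit.pos p)⟩} : Prog) X Y →
        (Sat X (Reduct Y (Fml.lit (Lit.pos p))) ↔ Sat X (Reduct Y (Fml.lit (Lit.pos q))))) ∧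
    ¬ StrongEq
        (({⟨Fml.lit (Lit.pos p), Fml.lit (Lit.pos q)⟩,
           ⟨Fml.lit (Lit.pos q), Fml.lit (Lit.pos p)⟩} : Prog) ∪
          {⟨Fml.lit (Lit.neg p), Fml.top⟩})
        (({⟨Fml.lit (Lit.pos p), Fml.lit (Lit.pos q)⟩,
           ⟨Fml.lit (Lit.pos q), Fml.lit (Lit.pos p)⟩} : Prog) ∪
          {⟨Fml.lit (Lit.neg q), Fml.top⟩}) := by
  refine ⟨fun X Y hXY => ?_, fun hstrong => ?_⟩
  · have hX : SatProg X (ReductProg Y (loop p q)) := hXY.2.2.2.2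
    rw [reductProg_loop, satProg_loop_iff] at hX
    exact hX
  · have hanswer := (hstrong ∅ {Lit.neg p}).1 (by
      rw [Set.union_empty]
      exact answerSet_loop_union_neg_fact p q)
    have hq : Lit.neg q ∈ ({Lit.neg p} : Set Lit) :=
      mem_of_satProg_reductProg_of_fact hanswer.2.1 (Or.inl (Or.inr rfl))
    exact hpq (Lit.neg.inj hq).symm
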